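/- Let k > s ≥ 3 be integers, let N be a positive integer, let S ⊆ {1,…,N} be a k-AP free set, and let d₁,…,d_s ∈ {1,…,2N}. Set S_i = { x + 6(i−1)N − 1 + d_i : x ∈ S } for 1 ≤ i ≤ s, and A = S₁ ∪ ⋯ ∪ S_s. Then the sets S₁,…,S_s are pairwise disjoint, every nontrivial arithmetic progression contained in A of length greater than s is contained in a single S_i, and A is k-AP free with |A| = s·|S|. -/

import Mathlib

open Finset Pointwise

/-- The `k`-term arithmetic progression `{x, x+d, …, x+(k-1)d}` as a finite set. -/
def AP (k : ℕ) (x d : ℤ) : Finset ℤ := (Finset.range k).image (fun i : ℕ => x + (i : ℤ) * d)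

/-- A set of integers is `k`-AP free if it contains no nontrivial `k`-term
arithmetic progression. -/
def APFree (k : ℕ) (A : Set ℤ) : Prop :=
  ∀ x d : ℤ, d ≠ 0 → ¬ (↑(AP k x d) : Set ℤ) ⊆ A

/-- `fAP s A` is the number of nontrivial `s`-term arithmetic progressions contained
in the finite set `A`. -/
noncomputable def fAP (s : ℕ) (A : Finset ℤ) : ℕ :=
  Nat.card {P : Finset ℤ // P ⊆ A ∧ ∃ x d : ℤ, d ≠ 0 ∧ P = AP s x d}

/-- `fsk s k n` is the maximum number of nontrivial `s`-term arithmetic progressions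
in a `k`-AP free set of `n` integers. -/
noncomputable def fsk (s k n : ℕ) : ℕ :=
  sSup {m | ∃ A : Finset ℤ, A.card = n ∧ APFree k ↑A ∧ fAP s A = m}

/-- `rk k n` is the size of the largest `k`-AP free subset of `{1, …, n}`. -/
noncomputable def rk (k n : ℕ) : ℕ :=
  sSup {m | ∃ A : Finset ℤ, A ⊆ Finset.Icc 1 (n : ℤ) ∧ APFree k ↑A ∧ A.card = m}

/-- The partial sumset `A +_G B` along the edge set `E` of a bipartite graph. -/
def partialSumset (E : Finset (ℤ × ℤ)) : Finset ℤ := E.image (fun e => e.1 + e.2)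

/-- `pathCount A B E a a'` is the number of (ordered) paths `(a, b, a'', b', a')` of
length four between `a` and `a'` in the bipartite graph with parts `A`, `B` and
edge set `E`. -/
def pathCount (A B : Finset ℤ) (E : Finset (ℤ × ℤ)) (a a' : ℤ) : ℕ :=
  ((B ×ˢ A ×ˢ B).filter (fun t =>
    (a, t.1) ∈ E ∧ (t.2.1, t.1) ∈ E ∧ (t.2.1, t.2.2) ∈ E ∧ (a', t.2.2) ∈ E)).card

/-!
The blocks `S_i` are translates of `S` lying in the windows `[6iN + 1, 6iN + 3N - 1]`: each
block has diameter at most `3N - 2` while distinct blocks are more than `3N - 2` apart. An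
arithmetic progression in `A` whose common difference has absolute value at most `3N - 2`
cannot jump from one block to another, so it stays in the block of its first term; one with a
larger difference meets each block at most once, so it has at most `s` terms. Hence a
progression of length greater than `s` lies in a single translate of `S`, which is as `k`-AP
free as `S` itself.
-/

lemma mem_AP {L : ℕ} {x d y : ℤ} :
    y ∈ AP L x d ↔ ∃ j : ℕ, j < L ∧ y = x + (j : ℤ) * d := by
  simp [AP, eq_comm]

lemma image_add_AP (L : ℕ) (x d c : ℤ) : (AP L x d).image (· + c) = AP L (x + c) d := by
  simp only [AP, image_image]
  congr 1
  funext j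
  simp only [Function.comp_apply]
  ring

lemma APFree.image_add {k : ℕ} {S : Finset ℤ} (h : APFree k ↑S) (c : ℤ) :
    APFree k ↑(S.image (· + c)) := by
  intro x d hd hsub
  apply h (x - c) d hd
  rwa [coe_subset, ← image_subset_image_iff (add_left_injective c), image_add_AP, sub_add_cancel,
    ← coe_subset]

lemma abs_le_abs_natCast_mul_sub {m : ℤ} {i j : ℕ} (hij : i ≠ j) : |m| ≤ |i * m - j * m| := by
  rw [← sub_mul, abs_mul]
  exact le_mul_of_one_le_left (abs_nonneg m) (Int.one_le_abs (sub_ne_zero.mpr (by exact_mod_cast hij)))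

structure SeparatedBlocks {ι : Type*} (B : ι → Finset ℤ) (D : ℤ) : Prop where
  abs_sub_le : ∀ i, ∀ y ∈ B i, ∀ z ∈ B i, |y - z| ≤ D
  lt_abs_sub : ∀ i j, i ≠ j → ∀ y ∈ B i, ∀ z ∈ B j, D < |y - z|

namespace SeparatedBlocks

variable {ι : Type*} {B : ι → Finset ℤ} {D : ℤ}

lemma of_subset_Icc (a : ι → ℤ) (hB : ∀ i, B i ⊆ Icc (a i) (a i + D))
    (ha : ∀ i j, i ≠ j → 2 * D < |a i - a j|) : SeparatedBlocks B D where
  abs_sub_le i y hy z hz := by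
    have hy := mem_Icc.mp (hB i hy)
    have hz := mem_Icc.mp (hB i hz)
    rw [abs_le]
    constructor <;> linarith
  lt_abs_sub i j hij y hy z hz := by
    have hy := mem_Icc.mp (hB i hy)
    have hz := mem_Icc.mp (hB j hz)
    have := ha i j hij
    rw [lt_abs] at this ⊢
    omega

lemma pairwise_disjoint (h : SeparatedBlocks B D) : Pairwise (Function.onFun Disjoint B) := by
  intro i j hij
  rw [Function.onFun, disjoint_left]
  intro y hi hj
  have := h.abs_sub_le i y hi y hi
  have := h.lt_abs_sub i j hij y hi y hj
  linarith

variable {L : ℕ} {x dd : ℤ}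

lemma mem_of_abs_le (h : SeparatedBlocks B D) (hdd : |dd| ≤ D)
    (hterm : ∀ j < L, ∃ i, x + j * dd ∈ B i) {i : ι} (hx : x ∈ B i) :
    ∀ j < L, x + j * dd ∈ B i := by
  intro j
  induction j with
  | zero => simpa using fun _ => hx
  | succ j ih =>
    intro hj
    obtain ⟨i', hi'⟩ := hterm (j + 1) hj
    by_contra hne
    have hstep := h.lt_abs_sub i' i (by rintro rfl; exact hne hi') _ hi' _ (ih (by omega))
    rw [show x + ((j + 1 : ℕ) : ℤ) * dd - (x + j * dd) = dd by push_cast; ring] at hstep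
    linarith

lemma card_le_of_lt_abs [Fintype ι] (h : SeparatedBlocks B D) (hdd : D < |dd|)
    (hterm : ∀ j < L, ∃ i, x + j * dd ∈ B i) : L ≤ Fintype.card ι := by
  choose f hf using fun j : Fin L => hterm j j.2
  suffices Function.Injective f by simpa using Fintype.card_le_of_injective f this
  intro j j' hjj'
  by_contra hne
  have hdiam := h.abs_sub_le _ _ (hjj' ▸ hf j) _ (hf j')
  rw [add_sub_add_left_eq_sub] at hdiam
  linarith [abs_le_abs_natCast_mul_sub (m := dd) (Fin.val_ne_of_ne hne)]

lemma exists_AP_subset [Fintype ι] (h : SeparatedBlocks B D) (hL : Fintype.card ι < L)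
    (hsub : (↑(AP L x dd) : Set ℤ) ⊆ ↑(univ.biUnion B)) :
    ∃ i, (↑(AP L x dd) : Set ℤ) ⊆ ↑(B i) := by
  have hterm : ∀ j < L, ∃ i, x + j * dd ∈ B i := fun j hj => by
    simpa using hsub (mem_AP.mpr ⟨j, hj, rfl⟩)
  rcases le_or_gt |dd| D with hdd | hdd
  · obtain ⟨i, hi⟩ := hterm 0 (by omega)
    refine ⟨i, fun y hy => ?_⟩
    obtain ⟨j, hj, rfl⟩ := mem_AP.mp hy
    exact h.mem_of_abs_le hdd hterm (by simpa using hi) j hj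
  · exact absurd (h.card_le_of_lt_abs hdd hterm) (by omega)

end SeparatedBlocks

lemma separatedBlocks_image_add {s N : ℕ} {S : Finset ℤ} (hS : S ⊆ Icc 1 (N : ℤ)) {c : Fin s → ℤ}
    (hc : ∀ i : Fin s, c i ∈ Icc ((i : ℕ) * (6 * N) : ℤ) ((i : ℕ) * (6 * N) + 2 * N - 1)) :
    SeparatedBlocks (fun i => S.image (· + c i)) (3 * N - 2) := by
  refine .of_subset_Icc (fun i => (i : ℕ) * (6 * N) + 1) (fun i y hy => ?_) fun i j hij => ?_
  · obtain ⟨x, hx, rfl⟩ := mem_image.mp hy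
    have := mem_Icc.mp (hS hx)
    have := mem_Icc.mp (hc i)
    exact mem_Icc.mpr ⟨by linarith, by linarith⟩
  · have := abs_le_abs_natCast_mul_sub (m := 6 * N) (Fin.val_ne_of_ne hij)
    rw [abs_of_nonneg (by positivity)] at this
    rw [add_sub_add_right_eq_sub]
    linarith

theorem block_construction_general (k s : ℕ) (hk : s < k) (N : ℕ)
    (S : Finset ℤ) (hS : S ⊆ Finset.Icc 1 (N : ℤ)) (hSfree : APFree k ↑S)
    (d : Fin s → ℤ) (hd : ∀ i, d i ∈ Finset.Icc (1 : ℤ) (2 * N))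
    (Si : Fin s → Finset ℤ)
    (hSi : ∀ i, Si i = S.image (fun x => x + 6 * ((i : ℕ) : ℤ) * N - 1 + d i))
    (A : Finset ℤ) (hA : A = Finset.univ.biUnion Si) :
    (∀ i j, i ≠ j → Disjoint (Si i) (Si j)) ∧
    (∀ (x dd : ℤ) (L : ℕ), s < L → dd ≠ 0 → (↑(AP L x dd) : Set ℤ) ⊆ ↑A →
      ∃ i, (↑(AP L x dd) : Set ℤ) ⊆ ↑(Si i)) ∧
    APFree k ↑A ∧ A.card = s * S.card := by
  set c : Fin s → ℤ := fun i => 6 * ((i : ℕ) : ℤ) * N - 1 + d i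
  have hSi' : Si = fun i => S.image (· + c i) := by
    funext i
    rw [hSi i]
    congr 1
    funext x
    ring
  have hsep : SeparatedBlocks Si (3 * N - 2) := hSi' ▸ separatedBlocks_image_add hS fun i => by
    have := mem_Icc.mp (hd i)
    exact mem_Icc.mpr ⟨by linarith, by linarith⟩
  have hblock : ∀ (x dd : ℤ) (L : ℕ), s < L → (↑(AP L x dd) : Set ℤ) ⊆ ↑A →
      ∃ i, (↑(AP L x dd) : Set ℤ) ⊆ ↑(Si i) := fun x dd L hL hsub =>
    hsep.exists_AP_subset (by simpa using hL) (hA ▸ hsub)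
  refine ⟨fun _ _ => (hsep.pairwise_disjoint ·), fun x dd L hL _ => hblock x dd L hL, ?_, ?_⟩
  · intro x dd hdd hsub
    obtain ⟨i, hi⟩ := hblock x dd k hk hsub
    rw [hSi'] at hi
    exact hSfree.image_add (c i) x dd hdd hi
  · rw [hA, card_biUnion (hsep.pairwise_disjoint.set_pairwise _), hSi']
    simp only [card_image_of_injective _ (add_left_injective _), sum_const, card_univ,
      Fintype.card_fin, smul_eq_mul]

theorem block_construction (k s : ℕ) (hs : 3 ≤ s) (hk : s < k) (N : ℕ) (hN : 0 < N)
    (S : Finset ℤ) (hS : S ⊆ Finset.Icc 1 (N : ℤ)) (hSfree : APFree k ↑S)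
    (d : Fin s → ℤ) (hd : ∀ i, d i ∈ Finset.Icc (1 : ℤ) (2 * N))
    (Si : Fin s → Finset ℤ)
    (hSi : ∀ i, Si i = S.image (fun x => x + 6 * ((i : ℕ) : ℤ) * N - 1 + d i))
    (A : Finset ℤ) (hA : A = Finset.univ.biUnion Si) :
    (∀ i j, i ≠ j → Disjoint (Si i) (Si j)) ∧
    (∀ (x dd : ℤ) (L : ℕ), s < L → dd ≠ 0 → (↑(AP L x dd) : Set ℤ) ⊆ ↑A →
      ∃ i, (↑(AP L x dd) : Set ℤ) ⊆ ↑(Si i)) ∧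
    APFree k ↑A ∧ A.card = s * S.card :=
  block_construction_general k s hk N S hS hSfree d hd Si hSi A hA
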